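/- arXiv:2310.03058 — 2 statements merged into one kernel-verified Lean document; each statement's English description precedes it below -/
import Mathlib

section
/- Consider the VNLM. There exists a threshold X₀ > 0 such that for every initial value x₀ ≥ X₀, the solution of the VNLM with x(0) = x₀ blows up in finite time: there is no solution defined on all of [0, ∞), and the maximal solution exists only on an interval [0, T*) with T* < ∞ and limsup_{t → T*⁻} x(t) = +∞. -/
/-!
For `x₀ ≥ 4 k_max e^{(r+1) r / (a k_min)}` the solution stays positive (it solves `x' = F(t) x`),
so `h ≥ 0` and `x` lies above the solution `φ = x₀ / (1 + (r / k_min) x₀ t)` of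
`φ' = -(r / k_min) φ²`, which stays above `2 k_max` up to `t₁ = k_min / (4 r k_max)`.
Integrating `φ` gives `h(t₁) ≥ r + 1`. From then on `r - h ≤ -1` and `x ≥ 2 k_max ≥ 2 k`,
so `x' ≥ x² / (2 k_max)` and `1 / x` would vanish before `t₁ + 1`: no solution lives past
`t₁ + 1`. If moreover `limsup x < ∞` at `T*`, then `x` is bounded on `[0, T*)`, so `(x, h)`
solves a `C¹` system with bounded right-hand side, has a limit at `T*`, and continues past `T*`
by Picard–Lindelöf.
-/

open Set Filter MeasureTheory

/-- The variable carrying capacity `k(t) = (k_max − k_min)·(cos(dπt)+1)/2 + k_min`. -/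
noncomputable def kcap (kmin kmax d t : ℝ) : ℝ :=
  (kmax - kmin) * ((Real.cos (d * Real.pi * t) + 1) / 2) + kmin

/-- The cumulative density `h(t) = a·∫₀ᵗ x(s) ds`. -/
noncomputable def hcum (a : ℝ) (x : ℝ → ℝ) (t : ℝ) : ℝ :=
  a * ∫ s in (0:ℝ)..t, x s

/-- `x` is a (C¹) solution of the VNLM on the set `D`:
it is continuous on `D` and satisfies
`x′(t) = (r − h(t))·x(t)·(1 − x(t)/k(t))` for all `t ∈ D`. -/
def IsVNLMSolOn (a r d kmin kmax : ℝ) (x : ℝ → ℝ) (D : Set ℝ) : Prop :=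
  ContinuousOn x D ∧
  ∀ t ∈ D, HasDerivWithinAt x
    ((r - hcum a x t) * x t * (1 - x t / kcap kmin kmax d t)) D t

/-- The solution of the VNLM starting from `x₀` blows up in finite time:
there is no solution on all of `[0, ∞)`, and every maximal solution lives on
an interval `[0, T*)` with `T* < ∞` and `limsup_{t → T*⁻} x(t) = +∞`. -/
def VNLMBlowsUp (a r d kmin kmax x0 : ℝ) : Prop :=
  (¬ ∃ x : ℝ → ℝ, x 0 = x0 ∧ IsVNLMSolOn a r d kmin kmax x (Set.Ici 0)) ∧
  ∀ (Tstar : ℝ) (x : ℝ → ℝ), 0 < Tstar → x 0 = x0 →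
    IsVNLMSolOn a r d kmin kmax x (Set.Ico 0 Tstar) →
    (¬ ∃ b : ℝ, Tstar < b ∧ ∃ y : ℝ → ℝ, y 0 = x0 ∧
        IsVNLMSolOn a r d kmin kmax y (Set.Ico 0 b) ∧
        ∀ t ∈ Set.Ico (0:ℝ) Tstar, y t = x t) →
    Filter.limsup (fun t => (x t : EReal)) (nhdsWithin Tstar (Set.Iio Tstar)) = ⊤

open Topology Function

theorem UniformContinuousOn.exists_tendsto_nhdsWithin {α β : Type*} [UniformSpace α]
    [UniformSpace β] [CompleteSpace β] {f : α → β} {s : Set α} {b : α}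
    (hf : UniformContinuousOn f s) (hb : b ∈ closure s) : ∃ P, Tendsto f (𝓝[s] b) (𝓝 P) := by
  have : (𝓝[s] b).NeBot := mem_closure_iff_nhdsWithin_neBot.1 hb
  refine cauchy_map_iff_exists_tendsto.1 ⟨inferInstance, ?_⟩
  rw [prod_map_map_eq]
  refine hf.mono_left (le_inf (cauchy_nhds.mono nhdsWithin_le_nhds).2 ?_)
  rw [← prod_principal_principal]
  exact prod_mono inf_le_right inf_le_right

theorem exists_forall_le_of_limsup_ne_top {x : ℝ → ℝ} {a T : ℝ} (hx : ContinuousOn x (Ico a T))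
    (h : limsup (fun t => (x t : EReal)) (𝓝[<] T) ≠ ⊤) : ∃ C, ∀ t ∈ Ico a T, x t ≤ C := by
  obtain ⟨C, hC, -⟩ := EReal.lt_iff_exists_real_btwn.1 (lt_top_iff_ne_top.2 h)
  obtain ⟨u, hu, hCu⟩ := mem_nhdsLT_iff_exists_Ioo_subset.1 (eventually_lt_of_limsup_lt hC)
  obtain ⟨C', hC'⟩ := isCompact_Icc.bddAbove_image (hx.mono (Icc_subset_Ico_right hu))
  refine ⟨max C C', fun t ht => ?_⟩
  rcases le_or_gt t u with htu | htu
  · exact (hC' ⟨t, ⟨ht.1, htu⟩, rfl⟩).trans (le_max_right _ _)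
  · exact (EReal.coe_le_coe_iff.1 (hCu ⟨htu, ht.2⟩).le).trans (le_max_left _ _)

section ODE

variable {E : Type*} [NormedAddCommGroup E] [NormedSpace ℝ E]

theorem HasDerivWithinAt.Ici_of_Ico {f : ℝ → E} {f' : E} {a b t : ℝ}
    (h : HasDerivWithinAt f f' (Ico a b) t) (ht : t ∈ Ico a b) : HasDerivWithinAt f f' (Ici t) t :=
  h.mono_of_mem_nhdsWithin (mem_of_superset (Ico_mem_nhdsGE ht.2) (Ico_subset_Ico_left ht.1))

theorem Convex.eqOn_of_hasDerivWithinAt_eq {f g f' : ℝ → E} {s : Set ℝ} (hs : Convex ℝ s)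
    (hf : ∀ t ∈ s, HasDerivWithinAt f (f' t) s t) (hg : ∀ t ∈ s, HasDerivWithinAt g (f' t) s t)
    {t₀ : ℝ} (ht₀ : t₀ ∈ s) (h : f t₀ = g t₀) : EqOn f g s := by
  intro t ht
  have := hs.norm_image_sub_le_of_norm_hasDerivWithin_le (f := f - g) (C := 0)
    (fun u hu => ((hf u hu).sub (hg u hu)).congr_deriv (sub_self _)) (fun _ _ => norm_zero.le)
    ht₀ ht
  simpa [h, sub_eq_zero] using this

theorem hasDerivWithinAt_integral_Ico [CompleteSpace E] {f : ℝ → E} {a b t : ℝ}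
    (hf : ContinuousOn f (Ico a b)) (ht : t ∈ Ico a b) :
    HasDerivWithinAt (fun u => ∫ s in a..u, f s) (f t) (Ico a b) t := by
  obtain ⟨c, htc, hcb⟩ := exists_between ht.2
  have : Fact (t ∈ Icc a c) := ⟨⟨ht.1, htc.le⟩⟩
  have hfc : ContinuousOn f (Icc a c) := hf.mono (Icc_subset_Ico_right hcb)
  have hderiv : HasDerivWithinAt (fun u => ∫ s in a..u, f s) (f t) (Icc a c) t :=
    intervalIntegral.integral_hasDerivWithinAt_right
      (hfc.mono (uIcc_subset_Icc (left_mem_Icc.2 (ht.1.trans htc.le)) Fact.out)).intervalIntegrable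
      (hfc.stronglyMeasurableAtFilter_nhdsWithin measurableSet_Icc t) (hfc t Fact.out)
  exact hderiv.mono_of_mem_nhdsWithin <| mem_nhdsWithin.2
    ⟨Iio c, isOpen_Iio, htc, fun s hs => ⟨hs.2.1, hs.1.le⟩⟩

theorem exists_tendsto_nhdsLT_of_nnnorm_hasDerivWithinAt_le [CompleteSpace E] {f f' : ℝ → E}
    {a b : ℝ} (C : NNReal) (hab : a < b)
    (hf : ∀ t ∈ Ico a b, HasDerivWithinAt f (f' t) (Ico a b) t)
    (hC : ∀ t ∈ Ico a b, ‖f' t‖₊ ≤ C) : ∃ P, Tendsto f (𝓝[<] b) (𝓝 P) := by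
  have hb : b ∈ closure (Ico a b) := by rw [closure_Ico hab.ne]; exact right_mem_Icc.2 hab.le
  obtain ⟨P, hP⟩ := ((convex_Ico a b).lipschitzOnWith_of_nnnorm_hasDerivWithin_le hf
    hC).uniformContinuousOn.exists_tendsto_nhdsWithin hb
  exact ⟨P, hP.mono_left (nhdsWithin_le_of_mem (Ico_mem_nhdsLT hab))⟩

theorem exists_hasDerivAt_Ioo_of_contDiffAt [CompleteSpace E] {V : ℝ → E → E} {t₀ : ℝ} {x₀ : E}
    (hV : ContDiffAt ℝ 1 (uncurry V) (t₀, x₀)) :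
    ∃ ε > 0, ∃ β : ℝ → E, β t₀ = x₀ ∧
      ∀ t ∈ Ioo (t₀ - ε) (t₀ + ε), HasDerivAt β (V t (β t)) t := by
  -- make the equation autonomous by adding the time as a coordinate
  have hF : ContDiffAt ℝ 1 (fun q : ℝ × E => ((1 : ℝ), uncurry V q)) (t₀, x₀) :=
    contDiffAt_const.prodMk hV
  obtain ⟨α, hα₀, ε, hε, hα⟩ :=
    hF.exists_forall_mem_closedBall_exists_eq_forall_mem_Ioo_hasDerivAt₀ t₀
  have htime : EqOn (fun t => (α t).1) id (Ioo (t₀ - ε) (t₀ + ε)) :=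
    (convex_Ioo _ _).eqOn_of_hasDerivWithinAt_eq (f' := fun _ => 1)
      (fun t ht => ((ContinuousLinearMap.fst ℝ ℝ E).hasFDerivAt.comp_hasDerivAt t
        (hα t ht)).hasDerivWithinAt)
      (fun t _ => (hasDerivAt_id t).hasDerivWithinAt)
      ⟨sub_lt_self t₀ hε, lt_add_of_pos_right t₀ hε⟩ (by simp [hα₀])
  refine ⟨ε, hε, fun t => (α t).2, by simp [hα₀], fun t ht => ?_⟩
  have hsnd : HasDerivAt (fun s => (α s).2) (V (α t).1 (α t).2) t :=
    (ContinuousLinearMap.snd ℝ ℝ E).hasFDerivAt.comp_hasDerivAt t (hα t ht)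
  rwa [show (α t).1 = t from htime ht] at hsnd

theorem hasDerivWithinAt_piecewise_Iio_of_tendsto {V : ℝ → E → E} {Z β : ℝ → E} {a T ε : ℝ}
    {P : E} (hV : ContinuousAt (uncurry V) (T, P)) (haT : a < T)
    (hZ : ∀ t ∈ Ico a T, HasDerivWithinAt Z (V t (Z t)) (Ico a T) t)
    (hZP : Tendsto Z (𝓝[<] T) (𝓝 P)) (hβT : β T = P)
    (hβ : ∀ t ∈ Ioo (T - ε) (T + ε), HasDerivAt β (V t (β t)) t) :
    ∀ t ∈ Ico a (T + ε), HasDerivWithinAt ((Iio T).piecewise Z β)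
      (V t ((Iio T).piecewise Z β t)) (Ico a (T + ε)) t := by
  set Y := (Iio T).piecewise Z β
  have hYZ : ∀ t < T, Y t = Z t := fun t ht => piecewise_eq_of_mem _ _ _ ht
  have hYβ : ∀ t, T ≤ t → Y t = β t := fun t ht => piecewise_eq_of_notMem _ _ _ (not_lt.2 ht)
  have hleft : ∀ t ∈ Ioo a T, HasDerivAt Y (V t (Z t)) t := fun t ht =>
    ((hZ t (Ioo_subset_Ico_self ht)).hasDerivAt (Ico_mem_nhds ht.1 ht.2)).congr_of_eventuallyEq
      (eventually_lt_nhds ht.2 |>.mono hYZ)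
  intro t ht
  rcases lt_trichotomy t T with htT | rfl | hTt
  · rw [hYZ t htT]
    refine ((hZ t ⟨ht.1, htT⟩).mono_of_mem_nhdsWithin ?_).congr_of_eventuallyEq ?_ (hYZ t htT)
    · exact mem_nhdsWithin.2 ⟨Iio T, isOpen_Iio, htT, fun s hs => ⟨hs.2.1, hs.1⟩⟩
    · exact eventually_nhdsWithin_of_eventually_nhds (eventually_lt_nhds htT |>.mono hYZ)
  · have hε : 0 < ε := by linarith [ht.2]
    have hderivY : Tendsto (deriv Y) (𝓝[<] t) (𝓝 (V t P)) := by
      have hlim : Tendsto (fun s => V s (Z s)) (𝓝[<] t) (𝓝 (V t P)) :=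
        hV.tendsto.comp ((tendsto_nhdsWithin_of_tendsto_nhds tendsto_id).prodMk_nhds hZP)
      refine hlim.congr' ?_
      filter_upwards [Ioo_mem_nhdsLT haT] with s hs using (hleft s hs).deriv.symm
    have hcont : ContinuousWithinAt Y (Ioo a t) t := by
      rw [ContinuousWithinAt, hYβ t le_rfl, hβT]
      exact (hZP.mono_left (nhdsWithin_mono _ Ioo_subset_Iio_self)).congr'
        (eventually_nhdsWithin_of_forall fun s hs => (hYZ s hs.2).symm)
    have hIic : HasDerivWithinAt Y (V t P) (Iic t) t :=
      hasDerivWithinAt_Iic_of_tendsto_deriv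
        (fun s hs => (hleft s hs).differentiableAt.differentiableWithinAt)
        hcont (Ioo_mem_nhdsLT haT) hderivY
    have hIci : HasDerivWithinAt Y (V t P) (Ici t) t := by
      rw [← hβT]
      exact (hβ t ⟨by linarith, by linarith⟩).hasDerivWithinAt.congr (fun s hs => hYβ s hs)
        (hYβ t le_rfl)
    rw [hYβ t le_rfl, hβT]
    exact (hIic.union hIci).mono fun s _ => le_total s t
  · have hβt := hβ t ⟨by linarith [ht.2], ht.2⟩
    rw [hYβ t hTt.le]
    exact (hβt.congr_of_eventuallyEq
      ((eventually_gt_nhds hTt).mono fun s hs => hYβ s hs.le)).hasDerivWithinAt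

theorem exists_extension_of_norm_le [ProperSpace E] {V : ℝ → E → E} {Z : ℝ → E} {a T R : ℝ}
    (hV : ContDiff ℝ 1 (uncurry V)) (haT : a < T)
    (hZ : ∀ t ∈ Ico a T, HasDerivWithinAt Z (V t (Z t)) (Ico a T) t)
    (hR : ∀ t ∈ Ico a T, ‖Z t‖ ≤ R) :
    ∃ b > T, ∃ Y : ℝ → E, (∀ t ∈ Ico a b, HasDerivWithinAt Y (V t (Y t)) (Ico a b) t) ∧
      EqOn Y Z (Ico a T) := by
  obtain ⟨C, hC⟩ := (isCompact_Icc.prod (isCompact_closedBall (0 : E) R))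
    |>.exists_bound_of_continuousOn hV.continuous.continuousOn
  obtain ⟨P, hP⟩ := exists_tendsto_nhdsLT_of_nnnorm_hasDerivWithinAt_le C.toNNReal haT hZ
    fun t ht => by
      rw [← NNReal.coe_le_coe, coe_nnnorm]
      exact (hC (t, Z t) ⟨Ico_subset_Icc_self ht, mem_closedBall_zero_iff.2 (hR t ht)⟩).trans
        (Real.le_coe_toNNReal C)
  obtain ⟨ε, hε, β, hβT, hβ⟩ := exists_hasDerivAt_Ioo_of_contDiffAt (hV.contDiffAt (x := (T, P)))
  exact ⟨T + ε, by linarith, _, hasDerivWithinAt_piecewise_Iio_of_tendsto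
    hV.continuous.continuousAt haT hZ hP hβT hβ, fun t ht => piecewise_eq_of_mem _ _ _ ht.2⟩

end ODE

theorem eq_mul_exp_integral_of_hasDerivWithinAt {x F : ℝ → ℝ} {a b : ℝ}
    (hF : ContinuousOn F (Ico a b))
    (hx : ∀ t ∈ Ico a b, HasDerivWithinAt x (F t * x t) (Ico a b) t) (hab : a < b) :
    ∀ t ∈ Ico a b, x t = x a * Real.exp (∫ s in a..t, F s) := by
  set G := fun u => ∫ s in a..u, F s
  have hw : ∀ t ∈ Ico a b, HasDerivWithinAt (fun u => x u * Real.exp (-G u)) 0 (Ico a b) t := by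
    intro t ht
    refine ((hx t ht).mul ((hasDerivWithinAt_integral_Ico hF ht).neg.exp)).congr_deriv ?_
    ring
  intro t ht
  have := (convex_Ico a b).eqOn_of_hasDerivWithinAt_eq (g := fun _ => x a) hw
    (fun _ _ => hasDerivWithinAt_const _ _ _) ⟨le_rfl, hab⟩ (by simp [G]) ht
  simp only at this
  rw [← this, mul_assoc, ← Real.exp_add, neg_add_cancel, Real.exp_zero, mul_one]

theorem kcap_mem_Icc {kmin kmax : ℝ} (d t : ℝ) (hk : kmin ≤ kmax) :
    kcap kmin kmax d t ∈ Icc kmin kmax := by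
  have := Real.neg_one_le_cos (d * Real.pi * t)
  have := Real.cos_le_one (d * Real.pi * t)
  constructor <;> unfold kcap <;> nlinarith

theorem kcap_pos {kmin kmax : ℝ} (d t : ℝ) (hkmin : 0 < kmin) (hk : kmin ≤ kmax) :
    0 < kcap kmin kmax d t :=
  hkmin.trans_le (kcap_mem_Icc d t hk).1

theorem contDiff_kcap (kmin kmax d : ℝ) : ContDiff ℝ ⊤ (kcap kmin kmax d) := by
  unfold kcap; fun_prop

/-- The VNLM as a first order system in the pair `(x, h)`, with `h' = a x`. -/
noncomputable def vnlmField (a r d kmin kmax t : ℝ) (p : ℝ × ℝ) : ℝ × ℝ :=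
  ((r - p.2) * p.1 * (1 - p.1 / kcap kmin kmax d t), a * p.1)

theorem contDiff_vnlmField {a r d kmin kmax : ℝ} (hkmin : 0 < kmin) (hk : kmin ≤ kmax) :
    ContDiff ℝ 1 (uncurry (vnlmField a r d kmin kmax)) := by
  have hkc : ContDiff ℝ 1 fun q : ℝ × (ℝ × ℝ) => kcap kmin kmax d q.1 :=
    ((contDiff_kcap kmin kmax d).of_le le_top).comp contDiff_fst
  unfold vnlmField uncurry
  refine ContDiff.prodMk ?_ (by fun_prop)
  refine ContDiff.mul (by fun_prop) (contDiff_const.sub (ContDiff.div (by fun_prop) hkc ?_))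
  exact fun q => (kcap_pos d q.1 hkmin hk).ne'

theorem hasDerivWithinAt_hcum {a T t : ℝ} {y : ℝ → ℝ} (hy : ContinuousOn y (Ico 0 T))
    (ht : t ∈ Ico 0 T) : HasDerivWithinAt (hcum a y) (a * y t) (Ico 0 T) t :=
  (hasDerivWithinAt_integral_Ico hy ht).const_mul a

@[simp]
theorem hcum_zero (a : ℝ) (y : ℝ → ℝ) : hcum a y 0 = 0 := by
  simp [hcum]

namespace IsVNLMSolOn

variable {a r d kmin kmax T : ℝ} {x : ℝ → ℝ}

theorem mono {D D' : Set ℝ} (hx : IsVNLMSolOn a r d kmin kmax x D) (hD : D' ⊆ D) :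
    IsVNLMSolOn a r d kmin kmax x D' :=
  ⟨hx.1.mono hD, fun t ht => (hx.2 t (hD ht)).mono hD⟩

theorem hasDerivWithinAt_Ici {t : ℝ} (hx : IsVNLMSolOn a r d kmin kmax x (Ico 0 T))
    (ht : t ∈ Ico 0 T) : HasDerivWithinAt x
      ((r - hcum a x t) * x t * (1 - x t / kcap kmin kmax d t)) (Ici t) t :=
  (hx.2 t ht).Ici_of_Ico ht

theorem hasDerivWithinAt_vnlmField (hx : IsVNLMSolOn a r d kmin kmax x (Ico 0 T)) :
    ∀ t ∈ Ico 0 T, HasDerivWithinAt (fun t => (x t, hcum a x t))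
      (vnlmField a r d kmin kmax t (x t, hcum a x t)) (Ico 0 T) t :=
  fun t ht => (hx.2 t ht).prodMk (hasDerivWithinAt_hcum hx.1 ht)

theorem of_hasDerivWithinAt_vnlmField {Y : ℝ → ℝ × ℝ} {b : ℝ} (hb : 0 < b)
    (hY : ∀ t ∈ Ico 0 b, HasDerivWithinAt Y (vnlmField a r d kmin kmax t (Y t)) (Ico 0 b) t)
    (hY0 : (Y 0).2 = 0) : IsVNLMSolOn a r d kmin kmax (fun t => (Y t).1) (Ico 0 b) := by
  have hfst : ∀ t ∈ Ico 0 b, HasDerivWithinAt (fun t => (Y t).1)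
      ((r - (Y t).2) * (Y t).1 * (1 - (Y t).1 / kcap kmin kmax d t)) (Ico 0 b) t :=
    fun t ht => (ContinuousLinearMap.fst ℝ ℝ ℝ).hasFDerivAt.comp_hasDerivWithinAt t (hY t ht)
  have hsnd : ∀ t ∈ Ico 0 b, HasDerivWithinAt (fun t => (Y t).2) (a * (Y t).1) (Ico 0 b) t :=
    fun t ht => (ContinuousLinearMap.snd ℝ ℝ ℝ).hasFDerivAt.comp_hasDerivWithinAt t (hY t ht)
  have hcont : ContinuousOn (fun t => (Y t).1) (Ico 0 b) :=
    fun t ht => (hfst t ht).continuousWithinAt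
  have hh : EqOn (hcum a fun t => (Y t).1) (fun t => (Y t).2) (Ico 0 b) :=
    (convex_Ico 0 b).eqOn_of_hasDerivWithinAt_eq (fun t ht => hasDerivWithinAt_hcum hcont ht)
      hsnd ⟨le_rfl, hb⟩ (by simp [hY0])
  exact ⟨hcont, fun t ht => by simpa only [hh ht] using hfst t ht⟩

theorem exists_extension {C : ℝ} (hkmin : 0 < kmin) (hk : kmin ≤ kmax) (hT : 0 < T)
    (hx : IsVNLMSolOn a r d kmin kmax x (Ico 0 T)) (hC : ∀ t ∈ Ico 0 T, |x t| ≤ C) :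
    ∃ b > T, ∃ y : ℝ → ℝ, IsVNLMSolOn a r d kmin kmax y (Ico 0 b) ∧ EqOn y x (Ico 0 T) := by
  have hC0 : 0 ≤ C := (abs_nonneg _).trans (hC 0 ⟨le_rfl, hT⟩)
  have hhcum : ∀ t ∈ Ico 0 T, |hcum a x t| ≤ |a| * C * T := by
    intro t ht
    have := (convex_Ico 0 T).norm_image_sub_le_of_norm_hasDerivWithin_le
      (fun s hs => hasDerivWithinAt_hcum (a := a) hx.1 hs)
      (fun s hs => by simpa [abs_mul] using mul_le_mul_of_nonneg_left (hC s hs) (abs_nonneg a))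
      ⟨le_rfl, hT⟩ ht
    simp only [hcum_zero, sub_zero, Real.norm_eq_abs, abs_of_nonneg ht.1] at this
    exact this.trans (by gcongr; exact ht.2.le)
  obtain ⟨b, hb, Y, hY, hYx⟩ := exists_extension_of_norm_le (R := C + |a| * C * T)
    (contDiff_vnlmField hkmin hk) hT hx.hasDerivWithinAt_vnlmField fun t ht =>
      norm_prod_le_iff.2 ⟨by simpa using (hC t ht).trans (le_add_of_nonneg_right (by positivity)),
        by simpa using (hhcum t ht).trans (le_add_of_nonneg_left hC0)⟩
  refine ⟨b, hb, fun t => (Y t).1, of_hasDerivWithinAt_vnlmField (hT.trans hb) hY ?_,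
    fun t ht => by simp [hYx ht]⟩
  simp [hYx ⟨le_rfl, hT⟩]

theorem pos (hkmin : 0 < kmin) (hk : kmin ≤ kmax) (hx : IsVNLMSolOn a r d kmin kmax x (Ico 0 T))
    (hx0 : 0 < x 0) : ∀ t ∈ Ico 0 T, 0 < x t := by
  intro t ht
  have hF : ContinuousOn (fun t => (r - hcum a x t) * (1 - x t / kcap kmin kmax d t)) (Ico 0 T) :=
    (continuousOn_const.sub fun _ hs => (hasDerivWithinAt_hcum hx.1 hs).continuousWithinAt).mul
      (continuousOn_const.sub (hx.1.div (contDiff_kcap kmin kmax d).continuous.continuousOn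
        fun s _ => (kcap_pos d s hkmin hk).ne'))
  rw [eq_mul_exp_integral_of_hasDerivWithinAt hF (fun s hs => (hx.2 s hs).congr_deriv (by ring))
    (ht.1.trans_lt ht.2) t ht]
  positivity

theorem monotoneOn_hcum (ha : 0 ≤ a) (hkmin : 0 < kmin) (hk : kmin ≤ kmax)
    (hx : IsVNLMSolOn a r d kmin kmax x (Ico 0 T)) (hx0 : 0 < x 0) :
    MonotoneOn (hcum a x) (Ico 0 T) :=
  monotoneOn_of_hasDerivWithinAt_nonneg (convex_Ico 0 T)
    (fun _ ht => (hasDerivWithinAt_hcum hx.1 ht).continuousWithinAt)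
    (fun _ ht => (hasDerivWithinAt_hcum hx.1 (interior_subset ht)).mono interior_subset)
    fun t ht => mul_nonneg ha (hx.pos hkmin hk hx0 t (interior_subset ht)).le

end IsVNLMSolOn

theorem neg_mul_sq_lt_vnlm_rate {r h k kmin X : ℝ} (hr : 0 < r) (hh : 0 ≤ h) (hkmin : 0 < kmin)
    (hk : kmin ≤ k) (hX : k ≤ X) : -(r / kmin) * X ^ 2 < (r - h) * X * (1 - X / k) := by
  have hk0 : 0 < k := hkmin.trans_le hk
  have hX0 : 0 < X := hk0.trans_le hX
  have hq : 1 ≤ X / k := (one_le_div hk0).2 hX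
  have hq' : X / k ≤ X / kmin := div_le_div_of_nonneg_left hX0.le hkmin hk
  have hsq : r / kmin * X ^ 2 = r * X * (X / kmin) := by field_simp
  nlinarith [mul_nonneg (mul_nonneg hh hX0.le) (sub_nonneg.2 hq), mul_pos hr hX0]

theorem sq_div_le_vnlm_rate {r h k kmax X : ℝ} (hh : r + 1 ≤ h) (hk0 : 0 < k) (hk : k ≤ kmax)
    (hX : 2 * kmax ≤ X) : X ^ 2 / (2 * kmax) ≤ (r - h) * X * (1 - X / k) := by
  have hkmax : 0 < kmax := hk0.trans_le hk
  have hX0 : 0 < X := by linarith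
  have hq : X / kmax ≤ X / k := div_le_div_of_nonneg_left hX0.le hk0 hk
  have hhalf : 1 ≤ X / (2 * kmax) := (one_le_div (by positivity)).2 hX
  have hsplit : X / kmax = X / (2 * kmax) + X / (2 * kmax) := by field_simp; ring
  have hsq : X ^ 2 / (2 * kmax) = X * (X / (2 * kmax)) := by ring
  have hgap : X / (2 * kmax) ≤ X / k - 1 := by linarith
  rw [hsq]
  nlinarith [mul_le_mul_of_nonneg_left hgap hX0.le,
    mul_nonneg (sub_nonneg.2 hh) (mul_nonneg hX0.le (by linarith : 0 ≤ X / k - 1))]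

noncomputable def lowerBarrier (r kmin x0 t : ℝ) : ℝ := x0 / (1 + r / kmin * x0 * t)

noncomputable def barrierTime (r kmin kmax : ℝ) : ℝ := kmin / (4 * r * kmax)

/-- Large enough that integrating `a * lowerBarrier` over `[0, barrierTime]` gives at least
`r + 1`. -/
noncomputable def blowupThreshold (a r kmin kmax : ℝ) : ℝ :=
  4 * kmax * Real.exp ((r + 1) * r / (a * kmin))

theorem barrierTime_pos {r kmin kmax : ℝ} (hr : 0 < r) (hkmin : 0 < kmin) (hkmax : 0 < kmax) :
    0 < barrierTime r kmin kmax := by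
  unfold barrierTime; positivity

theorem four_mul_le_blowupThreshold {a r kmin kmax : ℝ} (ha : 0 < a) (hr : 0 < r)
    (hkmin : 0 < kmin) (hkmax : 0 < kmax) : 4 * kmax ≤ blowupThreshold a r kmin kmax := by
  unfold blowupThreshold
  exact le_mul_of_one_le_right (by positivity) (Real.one_le_exp (by positivity))

section Barrier

variable {r kmin kmax x0 t : ℝ}

theorem hasDerivAt_lowerBarrier (hr : 0 < r) (hkmin : 0 < kmin) (hx0 : 0 < x0) (ht : 0 ≤ t) :
    HasDerivAt (lowerBarrier r kmin x0) (-(r / kmin) * lowerBarrier r kmin x0 t ^ 2) t := by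
  have hden : 1 + r / kmin * x0 * t ≠ 0 := by positivity
  have := ((hasDerivAt_id t).const_mul (r / kmin * x0)).const_add 1 |>.inv hden |>.const_mul x0
  refine (this.congr_deriv ?_).congr_of_eventuallyEq (Eventually.of_forall fun s => ?_)
  · simp only [lowerBarrier, id]; field_simp
  · simp [lowerBarrier, div_eq_mul_inv]

theorem two_mul_le_lowerBarrier (hr : 0 < r) (hkmin : 0 < kmin) (hkmax : 0 < kmax)
    (hx0 : 4 * kmax ≤ x0) (ht : t ∈ Icc 0 (barrierTime r kmin kmax)) :
    2 * kmax ≤ lowerBarrier r kmin x0 t := by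
  have hrt : r / kmin * t ≤ 1 / (4 * kmax) := by
    calc r / kmin * t ≤ r / kmin * barrierTime r kmin kmax := by gcongr; exact ht.2
      _ = 1 / (4 * kmax) := by simp only [barrierTime]; field_simp
  have hx0' : 0 ≤ x0 := by linarith
  rw [lowerBarrier, le_div_iff₀ (by have := ht.1; positivity)]
  have := mul_le_mul_of_nonneg_left hrt hx0'
  have e : x0 * (1 / (4 * kmax)) * (2 * kmax) = x0 / 2 := by field_simp; ring
  nlinarith

theorem hasDerivAt_lowerBarrier_primitive (hr : 0 < r) (hkmin : 0 < kmin) (hx0 : 0 < x0)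
    (ht : 0 ≤ t) : HasDerivAt (fun t => kmin / r * Real.log (1 + r / kmin * x0 * t))
      (lowerBarrier r kmin x0 t) t := by
  have hden : 1 + r / kmin * x0 * t ≠ 0 := by positivity
  refine (((hasDerivAt_id t).const_mul (r / kmin * x0)).const_add 1).log hden |>.const_mul
    (kmin / r) |>.congr_deriv ?_
  simp only [lowerBarrier, id]
  field_simp

theorem add_one_le_log_of_blowupThreshold_le {a : ℝ} (ha : 0 < a) (hr : 0 < r)
    (hkmin : 0 < kmin) (hkmax : 0 < kmax) (hx0 : blowupThreshold a r kmin kmax ≤ x0) :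
    r + 1 ≤ a * (kmin / r * Real.log (1 + r / kmin * x0 * barrierTime r kmin kmax)) := by
  set t₁ := barrierTime r kmin kmax
  have hexp : Real.exp ((r + 1) * r / (a * kmin)) ≤ 1 + r / kmin * x0 * t₁ := by
    have : r / kmin * x0 * t₁ = x0 / (4 * kmax) := by simp only [t₁, barrierTime]; field_simp
    rw [this, ← sub_le_iff_le_add', le_div_iff₀ (by positivity)]
    have := Real.exp_pos ((r + 1) * r / (a * kmin))
    rw [blowupThreshold] at hx0
    nlinarith
  calc r + 1 = a * (kmin / r * ((r + 1) * r / (a * kmin))) := by field_simp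
    _ ≤ _ := by
      gcongr
      exact (Real.le_log_iff_exp_le ((Real.exp_pos _).trans_le hexp)).2 hexp

end Barrier

namespace IsVNLMSolOn

variable {a r d kmin kmax T : ℝ} {x : ℝ → ℝ}

theorem lowerBarrier_le (ha : 0 ≤ a) (hr : 0 < r) (hkmin : 0 < kmin) (hk : kmin ≤ kmax)
    (hx : IsVNLMSolOn a r d kmin kmax x (Ico 0 T)) (hx0 : 4 * kmax ≤ x 0) :
    ∀ t ∈ Ico 0 T, t ≤ barrierTime r kmin kmax → lowerBarrier r kmin (x 0) t ≤ x t := by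
  have hkmax : 0 < kmax := hkmin.trans_le hk
  have hx0pos : 0 < x 0 := by linarith
  intro t ht ht₁
  have hsub : Icc 0 t ⊆ Ico 0 T := Icc_subset_Ico_right ht.2
  refine image_le_of_deriv_right_lt_deriv_boundary'
    (fun s hs => (hasDerivAt_lowerBarrier hr hkmin hx0pos hs.1).continuousAt.continuousWithinAt)
    (fun s hs => (hasDerivAt_lowerBarrier hr hkmin hx0pos hs.1).hasDerivWithinAt)
    (by simp [lowerBarrier]) (hx.1.mono hsub)
    (fun s hs => hx.hasDerivWithinAt_Ici (hsub (Ico_subset_Icc_self hs)))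
    (fun s hst hxs => ?_) ⟨ht.1, le_rfl⟩
  have hs : s ∈ Ico 0 T := hsub (Ico_subset_Icc_self hst)
  have hk' := kcap_mem_Icc d s hk
  have hh : 0 ≤ hcum a x s := by
    simpa using hx.monotoneOn_hcum ha hkmin hk hx0pos ⟨le_rfl, hs.1.trans_lt hs.2⟩ hs hs.1
  rw [hxs]
  refine neg_mul_sq_lt_vnlm_rate hr hh hkmin hk'.1 ?_
  have := two_mul_le_lowerBarrier hr hkmin hkmax hx0 ⟨hs.1, hst.2.le.trans ht₁⟩
  linarith [hk'.2]

theorem add_one_le_hcum_barrierTime (ha : 0 < a) (hr : 0 < r) (hkmin : 0 < kmin)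
    (hk : kmin ≤ kmax) (hx : IsVNLMSolOn a r d kmin kmax x (Ico 0 T))
    (hx0 : blowupThreshold a r kmin kmax ≤ x 0) (hT : barrierTime r kmin kmax < T) :
    r + 1 ≤ hcum a x (barrierTime r kmin kmax) := by
  have hkmax : 0 < kmax := hkmin.trans_le hk
  have hx04 : 4 * kmax ≤ x 0 := (four_mul_le_blowupThreshold ha hr hkmin hkmax).trans hx0
  have hx0pos : 0 < x 0 := by linarith
  set t₁ := barrierTime r kmin kmax
  set H := fun t => a * (kmin / r * Real.log (1 + r / kmin * x 0 * t))
  have hH : ∀ t, 0 ≤ t → HasDerivAt H (a * lowerBarrier r kmin (x 0) t) t := fun t ht =>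
    (hasDerivAt_lowerBarrier_primitive hr hkmin hx0pos ht).const_mul a
  have hsub : Icc 0 t₁ ⊆ Ico 0 T := Icc_subset_Ico_right hT
  refine (add_one_le_log_of_blowupThreshold_le ha hr hkmin hkmax hx0).trans ?_
  exact image_le_of_deriv_right_le_deriv_boundary (f := H)
    (fun s hs => (hH s hs.1).continuousAt.continuousWithinAt)
    (fun s hs => (hH s hs.1).hasDerivWithinAt) (by simp [H])
    (fun s hs => (hasDerivWithinAt_hcum hx.1 (hsub hs)).continuousWithinAt.mono hsub)
    (fun s hs => (hasDerivWithinAt_hcum hx.1 (hsub (Ico_subset_Icc_self hs))).Ici_of_Ico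
      (hsub (Ico_subset_Icc_self hs)))
    (fun s hs => mul_le_mul_of_nonneg_left (hx.lowerBarrier_le ha.le hr hkmin hk hx04 s
      (hsub (Ico_subset_Icc_self hs)) hs.2.le) ha.le)
    ⟨(barrierTime_pos hr hkmin hkmax).le, le_rfl⟩

theorem add_one_le_hcum (ha : 0 < a) (hr : 0 < r) (hkmin : 0 < kmin) (hk : kmin ≤ kmax)
    (hx : IsVNLMSolOn a r d kmin kmax x (Ico 0 T)) (hx0 : blowupThreshold a r kmin kmax ≤ x 0) :
    ∀ t ∈ Ico 0 T, barrierTime r kmin kmax ≤ t → r + 1 ≤ hcum a x t := by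
  have hkmax : 0 < kmax := hkmin.trans_le hk
  have hx0pos : 0 < x 0 := by linarith [four_mul_le_blowupThreshold ha hr hkmin hkmax]
  intro t ht ht₁
  have ht₁T : barrierTime r kmin kmax < T := ht₁.trans_lt ht.2
  exact (hx.add_one_le_hcum_barrierTime ha hr hkmin hk hx0 ht₁T).trans
    (hx.monotoneOn_hcum ha.le hkmin hk hx0pos ⟨(barrierTime_pos hr hkmin hkmax).le, ht₁T⟩ ht ht₁)

theorem two_mul_le (ha : 0 < a) (hr : 0 < r) (hkmin : 0 < kmin) (hk : kmin ≤ kmax)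
    (hx : IsVNLMSolOn a r d kmin kmax x (Ico 0 T)) (hx0 : blowupThreshold a r kmin kmax ≤ x 0) :
    ∀ t ∈ Ico 0 T, 2 * kmax ≤ x t := by
  have hkmax : 0 < kmax := hkmin.trans_le hk
  have hx04 : 4 * kmax ≤ x 0 := (four_mul_le_blowupThreshold ha hr hkmin hkmax).trans hx0
  set t₁ := barrierTime r kmin kmax
  have hbarrier : ∀ t ∈ Ico 0 T, t ≤ t₁ → 2 * kmax ≤ x t := fun t ht ht₁ =>
    (two_mul_le_lowerBarrier hr hkmin hkmax hx04 ⟨ht.1, ht₁⟩).trans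
      (hx.lowerBarrier_le ha.le hr hkmin hk hx04 t ht ht₁)
  intro t ht
  rcases le_or_gt t t₁ with ht₁ | ht₁
  · exact hbarrier t ht ht₁
  have ht₁0 : 0 ≤ t₁ := (barrierTime_pos hr hkmin hkmax).le
  have hsub : Icc t₁ t ⊆ Ico 0 T := fun s hs => ⟨ht₁0.trans hs.1, hs.2.trans_lt ht.2⟩
  refine image_le_of_deriv_right_lt_deriv_boundary' (f' := fun _ => 0) continuousOn_const
    (fun s _ => hasDerivWithinAt_const _ _ _) (hbarrier t₁ (hsub ⟨le_rfl, ht₁.le⟩) le_rfl)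
    (hx.1.mono hsub)
    (fun s hs => hx.hasDerivWithinAt_Ici (hsub (Ico_subset_Icc_self hs)))
    (fun s hst hxs => ?_) ⟨ht₁.le, le_rfl⟩
  have hs : s ∈ Ico 0 T := hsub (Ico_subset_Icc_self hst)
  have hk' := kcap_mem_Icc d s hk
  have := sq_div_le_vnlm_rate (hx.add_one_le_hcum ha hr hkmin hk hx0 s hs hst.1)
    (hkmin.trans_le hk'.1) hk'.2 hxs.le
  rw [← hxs] at this ⊢
  exact lt_of_lt_of_le (by positivity) this

theorem le_barrierTime_add_one (ha : 0 < a) (hr : 0 < r) (hkmin : 0 < kmin) (hk : kmin ≤ kmax)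
    (hx : IsVNLMSolOn a r d kmin kmax x (Ico 0 T)) (hx0 : blowupThreshold a r kmin kmax ≤ x 0) :
    T ≤ barrierTime r kmin kmax + 1 := by
  have hkmax : 0 < kmax := hkmin.trans_le hk
  set t₁ := barrierTime r kmin kmax
  by_contra! hT
  have ht₁0 : 0 ≤ t₁ := (barrierTime_pos hr hkmin hkmax).le
  have hsub : Icc t₁ (t₁ + 1) ⊆ Ico 0 T := fun s hs => ⟨ht₁0.trans hs.1, hs.2.trans_lt hT⟩
  have hlow : ∀ s ∈ Icc t₁ (t₁ + 1), 2 * kmax ≤ x s := fun s hs =>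
    hx.two_mul_le ha hr hkmin hk hx0 s (hsub hs)
  have hne : ∀ s ∈ Icc t₁ (t₁ + 1), x s ≠ 0 := fun s hs => by linarith [hlow s hs]
  -- `1 / x` decreases at rate at least `1 / (2 k_max)`, so it would vanish by time `t₁ + 1`
  have hinv := image_le_of_deriv_right_le_deriv_boundary (f := fun s => (x s)⁻¹)
    (B := fun s => (1 + t₁ - s) / (2 * kmax)) ((hx.1.mono hsub).inv₀ hne)
    (fun s hs => (hx.hasDerivWithinAt_Ici (hsub (Ico_subset_Icc_self hs))).inv
      (hne s (Ico_subset_Icc_self hs)))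
    (by simpa using inv_anti₀ (by positivity) (hlow t₁ ⟨le_rfl, by linarith⟩))
    (by fun_prop)
    (fun s _ => (((hasDerivAt_id s).const_sub (1 + t₁)).div_const (2 * kmax)).hasDerivWithinAt)
    (fun s hs => ?_) ⟨by linarith, le_rfl⟩
  · have := inv_pos.2 (show 0 < x (t₁ + 1) by linarith [hlow (t₁ + 1) ⟨by linarith, le_rfl⟩])
    have hzero : (1 + t₁ - (t₁ + 1)) / (2 * kmax) = 0 := by ring
    linarith
  · have hs' : s ∈ Ico 0 T := hsub (Ico_subset_Icc_self hs)
    have hk' := kcap_mem_Icc d s hk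
    have hrate := sq_div_le_vnlm_rate (hx.add_one_le_hcum ha hr hkmin hk hx0 s hs' hs.1)
      (hkmin.trans_le hk'.1) hk'.2 (hlow s (Ico_subset_Icc_self hs))
    have hxs : 0 < x s ^ 2 := pow_pos (by linarith [hlow s (Ico_subset_Icc_self hs)]) 2
    rw [neg_div, neg_div, neg_le_neg_iff, div_le_div_iff₀ (by positivity) hxs, one_mul]
    rwa [div_le_iff₀ (by positivity)] at hrate

end IsVNLMSolOn

theorem vnlm_blowup_large_data_general (a r d kmin kmax : ℝ)
    (ha : 0 < a) (hr : 0 < r)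
    (hkmin : 0 < kmin) (hk : kmin ≤ kmax) :
    ∃ X0 : ℝ, 0 < X0 ∧ ∀ x0 : ℝ, X0 ≤ x0 → VNLMBlowsUp a r d kmin kmax x0 := by
  have hkmax : 0 < kmax := hkmin.trans_le hk
  refine ⟨blowupThreshold a r kmin kmax,
    (by positivity : (0 : ℝ) < 4 * kmax).trans_le (four_mul_le_blowupThreshold ha hr hkmin hkmax),
    fun x0 hx0 => ⟨?_, ?_⟩⟩
  · rintro ⟨x, rfl, hx⟩
    have hx' : IsVNLMSolOn a r d kmin kmax x (Ico 0 (barrierTime r kmin kmax + 2)) :=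
      hx.mono Ico_subset_Ici_self
    linarith [hx'.le_barrierTime_add_one ha hr hkmin hk hx0]
  · rintro T x hT rfl hx hmax
    by_contra hlimsup
    obtain ⟨C, hC⟩ := exists_forall_le_of_limsup_ne_top hx.1 hlimsup
    have hlow := hx.two_mul_le ha hr hkmin hk hx0
    obtain ⟨b, hb, y, hy, hyx⟩ := hx.exists_extension hkmin hk hT
      fun t ht => abs_le.2 ⟨by linarith [hlow t ht, hC t ht], hC t ht⟩
    exact hmax ⟨b, hb, y, hyx ⟨le_rfl, hT⟩, hy, hyx⟩

/-- there is a threshold `X₀ > 0` such that for every initial value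
`x₀ ≥ X₀` the solution of the VNLM blows up in finite time. -/
theorem vnlm_blowup_large_data (a r d kmin kmax : ℝ)
    (ha : 0 < a) (hr : 0 < r) (hd : 0 < d)
    (hkmin : 0 < kmin) (hk : kmin ≤ kmax) :
    ∃ X0 : ℝ, 0 < X0 ∧ ∀ x0 : ℝ, X0 ≤ x0 → VNLMBlowsUp a r d kmin kmax x0 :=
  vnlm_blowup_large_data_general a r d kmin kmax ha hr hkmin hk
end

section
/- Consider the VNLM. If the initial value satisfies x₀ > k_max·(r/(a·k_min) + 1), then the cumulative pest density h(t) = a·∫₀ᵗ x(s) ds also blows up in finite time: with T* < ∞ denoting the finite blow-up time of the solution x, one has limsup_{t → T*⁻} h(t) = +∞. -/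
open Set Filter MeasureTheory

/-!
If `h` stayed bounded by `M` on `[0, T*)`, then `u = 1/x` would solve the linear equation
`u' = (h - r)(u - 1/k)` with coefficient bounded by `r + M`. Grönwall's inequality bounds `u`,
which keeps `x` positive and makes `u` Lipschitz with some constant `C`. As `x` is unbounded
near `T*`, this gives `u(s) ≤ C (T* - s)`, i.e. `x(s) ≥ 1 / (C (T* - s))`, whose integral
diverges logarithmically, so `h = a ∫ x` is unbounded after all.
-/

open Topology

theorem tendsto_log_sub_nhdsLT (b : ℝ) :
    Tendsto (fun t => Real.log (b - t)) (𝓝[<] b) atBot := by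
  refine Real.tendsto_log_nhdsGT_zero.comp (tendsto_nhdsWithin_iff.2 ⟨?_, ?_⟩)
  · exact tendsto_nhdsWithin_of_tendsto_nhds ((continuous_sub_left b).tendsto' b 0 (sub_self b))
  · filter_upwards [self_mem_nhdsWithin] with t (ht : t < b) using sub_pos.2 ht

theorem add_mul_log_sub_le_of_div_sub_le_deriv {f f' : ℝ → ℝ} {a b c t : ℝ}
    (hf : ContinuousOn f (Ico a b)) (hf' : ∀ s ∈ Ioo a b, HasDerivAt f (f' s) s)
    (hle : ∀ s ∈ Ioo a b, c / (b - s) ≤ f' s) (ht : t ∈ Ico a b) :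
    f a + c * Real.log (b - a) - c * Real.log (b - t) ≤ f t := by
  have hsub : Icc a t ⊆ Ico a b := Icc_subset_Ico_right ht.2
  have hmono : MonotoneOn (fun s => f s + c * Real.log (b - s)) (Icc a t) := by
    refine monotoneOn_of_hasDerivWithinAt_nonneg (convex_Icc a t)
      (f' := fun s => f' s + c * (-1 / (b - s))) ?_ (fun s hs => ?_) (fun s hs => ?_)
    · refine (hf.mono hsub).add (continuousOn_const.mul (ContinuousOn.log (by fun_prop) ?_))
      intro s hs
      exact (sub_pos.2 (hs.2.trans_lt ht.2)).ne'
    · rw [interior_Icc] at hs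
      have hsb : b - s ≠ 0 := (sub_pos.2 (hs.2.trans ht.2)).ne'
      exact ((hf' s ⟨hs.1, hs.2.trans ht.2⟩).add
        ((((hasDerivAt_id s).const_sub b).log hsb).const_mul c)).hasDerivWithinAt
    · rw [interior_Icc] at hs
      have hcs : c * (-1 / (b - s)) = -(c / (b - s)) := by ring
      linarith [hle s ⟨hs.1, hs.2.trans ht.2⟩]
  linarith [hmono ⟨le_rfl, ht.1⟩ ⟨ht.1, le_rfl⟩ ht.1]

theorem tendsto_atTop_of_div_sub_le_deriv {f f' : ℝ → ℝ} {a b c : ℝ} (hab : a < b) (hc : 0 < c)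
    (hf : ContinuousOn f (Ico a b)) (hf' : ∀ s ∈ Ioo a b, HasDerivAt f (f' s) s)
    (hle : ∀ s ∈ Ioo a b, c / (b - s) ≤ f' s) :
    Tendsto f (𝓝[<] b) atTop := by
  refine tendsto_atTop_mono' _ ?_ (tendsto_atTop_add_const_left _ (f a + c * Real.log (b - a))
    (tendsto_neg_atBot_atTop.comp ((tendsto_log_sub_nhdsLT b).const_mul_atBot hc)))
  filter_upwards [Ioo_mem_nhdsLT hab] with t ht
  have := add_mul_log_sub_le_of_div_sub_le_deriv hf hf' hle (Ioo_subset_Ico_self ht)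
  simp only [Function.comp_apply]
  linarith

theorem bddAbove_image_Ico_of_limsup_ne_top {f : ℝ → ℝ} {a b : ℝ} (hab : a < b)
    (hf : ContinuousOn f (Ico a b))
    (h : limsup (fun t => (f t : EReal)) (𝓝[<] b) ≠ ⊤) : BddAbove (f '' Ico a b) := by
  obtain ⟨c, hc, -⟩ := EReal.lt_iff_exists_real_btwn.1 (lt_top_iff_ne_top.2 h)
  obtain ⟨l, hl, hIoo⟩ := mem_nhdsLT_iff_exists_Ioo_subset.1 (eventually_lt_of_limsup_lt hc)
  have hcover : Ico a b ⊆ Icc a (max l a) ∪ Ioo l b := fun t ht => by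
    rcases le_or_gt t (max l a) with h | h
    · exact Or.inl ⟨ht.1, h⟩
    · exact Or.inr ⟨(le_max_left l a).trans_lt h, ht.2⟩
  refine BddAbove.mono (image_mono hcover) ?_
  rw [image_union, bddAbove_union]
  refine ⟨(isCompact_Icc.image_of_continuousOn (hf.mono ?_)).bddAbove, ⟨c, ?_⟩⟩
  · exact Icc_subset_Ico_right (max_lt hl hab)
  · rintro _ ⟨t, ht, rfl⟩
    have : (f t : EReal) < c := hIoo ht
    exact_mod_cast this.le

theorem inv_le_mul_sub_of_limsup_eq_top {x : ℝ → ℝ} {s b C : ℝ} (hs : s < b) (hC : 0 ≤ C)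
    (hlip : ∀ t ∈ Ioo s b, (x s)⁻¹ ≤ (x t)⁻¹ + C * (t - s))
    (hblow : limsup (fun t => (x t : EReal)) (𝓝[<] b) = ⊤) :
    (x s)⁻¹ ≤ C * (b - s) := by
  refine le_of_forall_pos_le_add fun ε hε => ?_
  have hfreq : ∃ᶠ t in 𝓝[<] b, ((ε⁻¹ : ℝ) : EReal) < x t :=
    frequently_lt_of_lt_limsup (by isBoundedDefault) (hblow ▸ EReal.coe_lt_top _)
  obtain ⟨t, hxt, ht⟩ := (hfreq.and_eventually (Ioo_mem_nhdsLT hs)).exists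
  have hxt : (x t)⁻¹ < ε := inv_lt_of_inv_lt₀ hε (by exact_mod_cast hxt)
  have := hlip t ht
  nlinarith [ht.2]

theorem pos_of_forall_pos_imp_le {f : ℝ → ℝ} {a b δ : ℝ} (hf : ContinuousOn f (Ico a b))
    (hδ : 0 < δ) (ha : 0 < f a)
    (hbound : ∀ t ∈ Ico a b, (∀ s ∈ Icc a t, 0 < f s) → δ ≤ f t) :
    ∀ t ∈ Ico a b, 0 < f t := by
  by_contra! ⟨z, hz, hfz⟩
  have hsub : Icc a z ⊆ Ico a b := Icc_subset_Ico_right hz.2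
  obtain ⟨t₁, ⟨ht₁, hft₁ : f t₁ ≤ 0⟩, hleast⟩ : ∃ t₁, IsLeast (Icc a z ∩ f ⁻¹' Iic 0) t₁ :=
    (isCompact_Icc.of_isClosed_subset
      ((hf.mono hsub).preimage_isClosed_of_isClosed isClosed_Icc isClosed_Iic)
      inter_subset_left).exists_isLeast ⟨z, ⟨hz.1, le_rfl⟩, hfz⟩
  have hat₁ : a < t₁ := ht₁.1.lt_of_ne (by rintro rfl; exact (hft₁.trans_lt ha).false)
  have hbefore : ∀ s ∈ Ico a t₁, δ ≤ f s := fun s hs =>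
    hbound s ⟨hs.1, hs.2.trans (ht₁.2.trans_lt hz.2)⟩ fun u hu => by
      by_contra! hfu
      exact (hleast ⟨⟨hu.1, hu.2.trans (hs.2.le.trans ht₁.2)⟩, hfu⟩).not_gt (hu.2.trans_lt hs.2)
  have hne : (𝓝[Ico a t₁] t₁).NeBot := by
    rw [← mem_closure_iff_nhdsWithin_neBot, closure_Ico hat₁.ne]
    exact ⟨hat₁.le, le_rfl⟩
  have hlim : δ ≤ f t₁ :=
    ge_of_tendsto ((hf t₁ (hsub ht₁)).mono (Ico_subset_Ico_right (ht₁.2.trans hz.2.le))).tendsto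
      (eventually_nhdsWithin_of_forall hbefore)
  linarith

theorem kcap_ge_kmin {kmin kmax : ℝ} (hk : kmin ≤ kmax) (d t : ℝ) :
    kmin ≤ kcap kmin kmax d t := by
  have := Real.neg_one_le_cos (d * Real.pi * t)
  unfold kcap
  nlinarith

section hcum

variable {a T t : ℝ} {x : ℝ → ℝ}

theorem hcum_nonneg (ha : 0 ≤ a) (ht : 0 ≤ t) (hx : ∀ s ∈ Icc 0 t, 0 ≤ x s) :
    0 ≤ hcum a x t :=
  mul_nonneg ha (intervalIntegral.integral_nonneg ht hx)

theorem continuousOn_hcum (hx : ContinuousOn x (Ico 0 T)) :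
    ContinuousOn (hcum a x) (Ico 0 T) := by
  intro t ht
  obtain ⟨m, hm, hmT⟩ := exists_between ht.2
  have hm0 : 0 ≤ m := ht.1.trans hm.le
  have hint : IntegrableOn x (uIcc 0 m) := by
    rw [uIcc_of_le hm0]
    exact (hx.mono (Icc_subset_Ico_right hmT)).integrableOn_Icc
  have hprim := intervalIntegral.continuousOn_primitive_interval hint
  rw [uIcc_of_le hm0] at hprim
  refine ((continuousOn_const.mul hprim) t ⟨ht.1, hm.le⟩).mono_of_mem_nhdsWithin ?_
  exact mem_nhdsWithin.2 ⟨Iio m, isOpen_Iio, hm, fun u hu => ⟨hu.2.1, hu.1.le⟩⟩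

theorem hasDerivAt_hcum (hx : ContinuousOn x (Ico 0 T)) (ht : t ∈ Ioo 0 T) :
    HasDerivAt (hcum a x) (a * x t) t := by
  have hopen : ContinuousOn x (Ioo 0 T) := hx.mono Ioo_subset_Ico_self
  refine (intervalIntegral.integral_hasDerivAt_right ?_
    (hopen.stronglyMeasurableAtFilter isOpen_Ioo t ht)
    (hopen.continuousAt (isOpen_Ioo.mem_nhds ht))).const_mul a
  exact (hx.mono (by rw [uIcc_of_le ht.1.le]; exact Icc_subset_Ico_right ht.2)).intervalIntegrable

end hcum

-- `u = 1 / x` solves the linear equation `u' = (h - r) (u - 1 / k)`; this is its right-hand side.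
noncomputable def vnlmInvRHS (a r d kmin kmax : ℝ) (x : ℝ → ℝ) (t : ℝ) : ℝ :=
  (hcum a x t - r) * ((x t)⁻¹ - (kcap kmin kmax d t)⁻¹)

section inverse

variable {a r d kmin kmax T M : ℝ} {x : ℝ → ℝ}

theorem IsVNLMSolOn.hasDerivWithinAt_inv (hsol : IsVNLMSolOn a r d kmin kmax x (Ico 0 T))
    {t : ℝ} (ht : t ∈ Ico 0 T) (hx : x t ≠ 0) :
    HasDerivWithinAt (fun s => (x s)⁻¹) (vnlmInvRHS a r d kmin kmax x t) (Ici t) t := by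
  have hderiv := ((hsol.2 t ht).mono_of_mem_nhdsWithin (Ico_mem_nhdsGE_of_mem ht)).inv hx
  refine hderiv.congr_deriv ?_
  unfold vnlmInvRHS
  field_simp
  ring

theorem norm_vnlmInvRHS_le (ha : 0 ≤ a) (hr : 0 ≤ r) (hkmin : 0 < kmin) (hk : kmin ≤ kmax)
    {t : ℝ} (ht : 0 ≤ t) (hpos : ∀ s ∈ Icc 0 t, 0 < x s) (hM : hcum a x t ≤ M) :
    ‖vnlmInvRHS a r d kmin kmax x t‖ ≤ (r + M) * ((x t)⁻¹ + kmin⁻¹) := by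
  have hh := hcum_nonneg ha ht fun s hs => (hpos s hs).le
  have hxt := inv_pos.2 (hpos t ⟨ht, le_rfl⟩)
  have hkt := kcap_ge_kmin hk d t
  have hkinv : (kcap kmin kmax d t)⁻¹ ≤ kmin⁻¹ := inv_anti₀ hkmin hkt
  have hkinv0 : 0 ≤ (kcap kmin kmax d t)⁻¹ := inv_nonneg.2 (hkmin.le.trans hkt)
  rw [vnlmInvRHS, norm_mul, Real.norm_eq_abs, Real.norm_eq_abs]
  exact mul_le_mul (abs_le.2 ⟨by linarith, by linarith⟩) (abs_le.2 ⟨by linarith, by linarith⟩)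
    (abs_nonneg _) (by linarith)

theorem IsVNLMSolOn.exists_inv_le (hsol : IsVNLMSolOn a r d kmin kmax x (Ico 0 T))
    (ha : 0 ≤ a) (hr : 0 ≤ r) (hkmin : 0 < kmin) (hk : kmin ≤ kmax) (hx0 : 0 < x 0)
    (hT : 0 ≤ T) (hM0 : 0 ≤ M) (hM : ∀ t ∈ Ico 0 T, hcum a x t ≤ M) :
    ∃ B, ∀ t ∈ Ico 0 T, 0 < x t ∧ (x t)⁻¹ ≤ B := by
  set K := r + M
  have hK : 0 ≤ K := add_nonneg hr hM0
  set B := gronwallBound (x 0)⁻¹ K (K / kmin) T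
  have hbound : ∀ t ∈ Ico 0 T, (∀ s ∈ Icc 0 t, 0 < x s) → (x t)⁻¹ ≤ B := by
    intro t ht hpos
    have hsub : Icc 0 t ⊆ Ico 0 T := Icc_subset_Ico_right ht.2
    have hgron := norm_le_gronwallBound_of_norm_deriv_right_le (f := fun s => (x s)⁻¹)
      (δ := (x 0)⁻¹) (K := K) (ε := K / kmin)
      ((hsol.1.mono hsub).inv₀ fun s hs => (hpos s hs).ne')
      (fun s hs => hsol.hasDerivWithinAt_inv (hsub (Ico_subset_Icc_self hs))
        (hpos s (Ico_subset_Icc_self hs)).ne')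
      (Real.norm_of_nonneg (inv_pos.2 hx0).le).le
      (fun s hs => by
        have hpos' : ∀ u ∈ Icc 0 s, 0 < x u := fun u hu => hpos u ⟨hu.1, hu.2.trans hs.2.le⟩
        have := norm_vnlmInvRHS_le (d := d) ha hr hkmin hk hs.1 hpos'
          (hM s (hsub (Ico_subset_Icc_self hs)))
        calc _ ≤ K * ((x s)⁻¹ + kmin⁻¹) := this
          _ = _ := by
            rw [norm_inv, Real.norm_of_nonneg (hpos s (Ico_subset_Icc_self hs)).le]
            ring) t ⟨ht.1, le_rfl⟩
    rw [norm_inv, Real.norm_of_nonneg (hpos t ⟨ht.1, le_rfl⟩).le, sub_zero] at hgron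
    exact hgron.trans (gronwallBound_mono (inv_pos.2 hx0).le (div_nonneg hK hkmin.le) hK ht.2.le)
  have hB : 0 < B := calc
    0 < (x 0)⁻¹ := inv_pos.2 hx0
    _ = gronwallBound (x 0)⁻¹ K (K / kmin) 0 := (gronwallBound_x0 _ _ _).symm
    _ ≤ B := gronwallBound_mono (inv_pos.2 hx0).le (div_nonneg hK hkmin.le) hK hT
  have hpos := pos_of_forall_pos_imp_le hsol.1 (inv_pos.2 hB) hx0
    fun t ht hpos => inv_le_of_inv_le₀ (hpos t ⟨ht.1, le_rfl⟩) (hbound t ht hpos)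
  exact ⟨B, fun t ht => ⟨hpos t ht, hbound t ht fun s hs => hpos s (Icc_subset_Ico_right ht.2 hs)⟩⟩

theorem IsVNLMSolOn.inv_le_inv_add (hsol : IsVNLMSolOn a r d kmin kmax x (Ico 0 T))
    (ha : 0 ≤ a) (hr : 0 ≤ r) (hkmin : 0 < kmin) (hk : kmin ≤ kmax) {B : ℝ}
    (hB : ∀ t ∈ Ico 0 T, 0 < x t ∧ (x t)⁻¹ ≤ B) (hM0 : 0 ≤ M) (hM : ∀ t ∈ Ico 0 T, hcum a x t ≤ M)
    {s t : ℝ} (hs : 0 ≤ s) (hst : s ≤ t) (ht : t < T) :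
    (x s)⁻¹ ≤ (x t)⁻¹ + (r + M) * (B + kmin⁻¹) * (t - s) := by
  have hsub : Icc s t ⊆ Ico 0 T := fun u hu => ⟨hs.trans hu.1, hu.2.trans_lt ht⟩
  have hlip := norm_image_sub_le_of_norm_deriv_right_le_segment (f := fun u => (x u)⁻¹)
    (C := (r + M) * (B + kmin⁻¹))
    ((hsol.1.mono hsub).inv₀ fun u hu => (hB u (hsub hu)).1.ne')
    (fun u hu => hsol.hasDerivWithinAt_inv (hsub (Ico_subset_Icc_self hu))
      (hB u (hsub (Ico_subset_Icc_self hu))).1.ne')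
    (fun u hu => by
      have hu' := hsub (Ico_subset_Icc_self hu)
      refine (norm_vnlmInvRHS_le ha hr hkmin hk hu'.1
        (fun v hv => (hB v ⟨hv.1, hv.2.trans_lt hu'.2⟩).1) (hM u hu')).trans ?_
      gcongr
      exact (hB u hu').2) t ⟨hst, le_rfl⟩
  rw [Real.norm_eq_abs] at hlip
  linarith [neg_abs_le ((x t)⁻¹ - (x s)⁻¹)]

end inverse

theorem vnlm_cumulative_blowup_general (a r d kmin kmax : ℝ)
    (ha : 0 < a) (hr : 0 < r)
    (hkmin : 0 < kmin) (hk : kmin ≤ kmax)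
    (x0 : ℝ) (hx0 : kmax * (r / (a * kmin) + 1) < x0)
    (Tstar : ℝ) (x : ℝ → ℝ) (hTpos : 0 < Tstar) (hinit : x 0 = x0)
    (hsol : IsVNLMSolOn a r d kmin kmax x (Set.Ico 0 Tstar))
    (hblow : Filter.limsup (fun t => (x t : EReal))
        (nhdsWithin Tstar (Set.Iio Tstar)) = ⊤) :
    Filter.limsup (fun t => (hcum a x t : EReal))
        (nhdsWithin Tstar (Set.Iio Tstar)) = ⊤ := by
  by_contra hbdd
  obtain ⟨M, hM⟩ := bddAbove_image_Ico_of_limsup_ne_top hTpos (continuousOn_hcum hsol.1) hbdd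
  rw [mem_upperBounds, forall_mem_image] at hM
  have hM0 : 0 ≤ M := by simpa [hcum] using hM ⟨le_rfl, hTpos⟩
  have hx0 : 0 < x 0 := hinit ▸ lt_of_le_of_lt (mul_nonneg (hkmin.le.trans hk) (by positivity)) hx0
  obtain ⟨B, hB⟩ := hsol.exists_inv_le ha.le hr.le hkmin hk hx0 hTpos.le hM0 hM
  set C := (r + M) * (B + kmin⁻¹)
  have hC : 0 < C := mul_pos (add_pos_of_pos_of_nonneg hr hM0)
    (add_pos ((inv_pos.2 hx0).trans_le (hB 0 ⟨le_rfl, hTpos⟩).2) (inv_pos.2 hkmin))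
  have hlow : ∀ s ∈ Ioo 0 Tstar, a / C / (Tstar - s) ≤ a * x s := by
    intro s hs
    have hinv := inv_le_mul_sub_of_limsup_eq_top hs.2 hC.le
      (fun t ht => hsol.inv_le_inv_add ha.le hr.le hkmin hk hB hM0 hM hs.1.le
        ht.1.le ht.2) hblow
    calc a / C / (Tstar - s) = a * (C * (Tstar - s))⁻¹ := by rw [div_div, div_eq_mul_inv]
      _ ≤ a * x s := by gcongr; exact inv_le_of_inv_le₀ (hB s (Ioo_subset_Ico_self hs)).1 hinv
  exact hbdd ((EReal.tendsto_coe_nhds_top_iff.2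
    (tendsto_atTop_of_div_sub_le_deriv hTpos (div_pos ha hC) (continuousOn_hcum hsol.1)
      (fun s hs => hasDerivAt_hcum hsol.1 hs) hlow)).limsup_eq)

/-- if `x₀ > k_max·(r/(a·k_min) + 1)`, then the cumulative pest
density `h(t) = a·∫₀ᵗ x(s) ds` also blows up in finite time: if `T* < ∞` is the
finite blow-up time of a maximal solution `x` (i.e. `limsup_{t → T*⁻} x(t) = +∞`),
then `limsup_{t → T*⁻} h(t) = +∞`. -/
theorem vnlm_cumulative_blowup (a r d kmin kmax : ℝ)
    (ha : 0 < a) (hr : 0 < r) (hd : 0 < d)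
    (hkmin : 0 < kmin) (hk : kmin ≤ kmax)
    (x0 : ℝ) (hx0 : kmax * (r / (a * kmin) + 1) < x0)
    (Tstar : ℝ) (x : ℝ → ℝ) (hTpos : 0 < Tstar) (hinit : x 0 = x0)
    (hsol : IsVNLMSolOn a r d kmin kmax x (Set.Ico 0 Tstar))
    (hmax : ¬ ∃ b : ℝ, Tstar < b ∧ ∃ y : ℝ → ℝ, y 0 = x0 ∧
        IsVNLMSolOn a r d kmin kmax y (Set.Ico 0 b) ∧
        ∀ t ∈ Set.Ico (0:ℝ) Tstar, y t = x t)
    (hblow : Filter.limsup (fun t => (x t : EReal))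
        (nhdsWithin Tstar (Set.Iio Tstar)) = ⊤) :
    Filter.limsup (fun t => (hcum a x t : EReal))
        (nhdsWithin Tstar (Set.Iio Tstar)) = ⊤ :=
  vnlm_cumulative_blowup_general a r d kmin kmax ha hr hkmin hk x0 hx0 Tstar x hTpos hinit hsol
    hblow
end
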